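/- Fix K ≥ 1, pairwise distinct positive reals N₁,…,N_K, positive reals b₁,…,b_K with cumulative sums B_k = Σ_{l=1}^k b_l, and define functions ħ_k : (0, 2^{B_k}] → ℝ recursively by ħ_K(x) = N_K·(2^{B_K/N_K} − x^{1/N_K}) and, for 1 ≤ k < K, ħ_k(x) = ∫_x^{2^{B_k}} t^{1/N_k − 1/N_{k+1} − 1}·ħ_{k+1}(t) dt. Then for every k and every x ∈ (0, 2^{B_k}], ħ_k(x) = (−1)^{K−k+1}·(Π_{i=k}^{K} N_i)·x^{1/N_k} + Σ_{i=0}^{K−k} c_{k,i}·x^{1/N_k − 1/N_{k+i}}, where the coefficients satisfy c_{K,0} = N_K·2^{B_K/N_K}, c_{k,i} = −(N_{k+i}·N_k/(N_{k+i}−N_k))·c_{k+1,i−1} for 1 ≤ i ≤ K−k, and c_{k,0} = (−1)^{K−k}·(Π_{i=k}^{K} N_i)·2^{B_k/N_k} + Σ_{i=1}^{K−k} c_{k+1,i−1}·(N_{k+i}·N_k/(N_{k+i}−N_k))·2^{B_k/N_k − B_k/N_{k+i}}. -/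

import Mathlib

/-! Downward induction on `k`. Substituting the closed form of `ħ_{k+1}` turns the integrand of
`ħ_k` into a finite combination of powers `t ^ (p - 1)`, each integrating to
`(2^{p B_k} − x^p)/p`.
The exponents `p = 1/N_k − 1/N_{k+i}` are nonzero because the `N_i` are distinct, and
`B_k ≤ B_{k+1}` keeps the range of integration inside the domain where the closed form of
`ħ_{k+1}` is already known. -/

open MeasureTheory Real

/-- The iterated integrals `ħ_{K,k}` arising as the high-SNR leading coefficient of the
`K`-round outage probability of VL-XP-HARQ, written with fuel `j = K − k`:
`hbarAux N B K 0 x = ħ_{K,K}(x) = N_K(2^{B_K/N_K} − x^{1/N_K})` and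
`hbarAux N B K (j+1) x = ħ_{K,K−j−1}(x)
  = ∫_x^{2^{B_{K−j−1}}} t^{1/N_{K−j−1} − 1/N_{K−j} − 1} ħ_{K,K−j}(t) dt`. -/
noncomputable def hbarAux (N B : ℕ → ℝ) (K : ℕ) : ℕ → ℝ → ℝ
  | 0, x => N K * ((2 : ℝ) ^ (B K / N K) - x ^ (1 / N K))
  | (j + 1), x =>
      ∫ t in Set.Ioo x ((2 : ℝ) ^ (B (K - (j + 1)))),
        t ^ (1 / N (K - (j + 1)) - 1 / N (K - j) - 1) * hbarAux N B K j t

/-- The coefficients `c_{k,i}` of the closed form of `ħ_{K,k}`, written with fuel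
`j = K − k` (so `coefAux N B K (K−k) i = c_{k,i}`): `c_{K,0} = N_K·2^{B_K/N_K}`,
`c_{k,i} = −(N_{k+i}N_k/(N_{k+i}−N_k))·c_{k+1,i−1}` for `1 ≤ i ≤ K−k`, and
`c_{k,0} = (−1)^{K−k}(Π_{i=k}^K N_i)·2^{B_k/N_k}
  + Σ_{i=1}^{K−k} c_{k+1,i−1}·(N_{k+i}N_k/(N_{k+i}−N_k))·2^{B_k/N_k − B_k/N_{k+i}}`. -/
noncomputable def coefAux (N B : ℕ → ℝ) (K : ℕ) : ℕ → ℕ → ℝ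
  | 0, 0 => N K * (2 : ℝ) ^ (B K / N K)
  | 0, _ + 1 => 0
  | (j + 1), (i + 1) =>
      -(N (K - (j + 1) + (i + 1)) * N (K - (j + 1))
          / (N (K - (j + 1) + (i + 1)) - N (K - (j + 1)))) * coefAux N B K j i
  | (j + 1), 0 =>
      (-1 : ℝ) ^ (j + 1) * (∏ i ∈ Finset.Icc (K - (j + 1)) K, N i)
          * (2 : ℝ) ^ (B (K - (j + 1)) / N (K - (j + 1)))
        + ∑ i ∈ Finset.Icc 1 (j + 1),
            coefAux N B K j (i - 1)
              * (N (K - (j + 1) + i) * N (K - (j + 1))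
                  / (N (K - (j + 1) + i) - N (K - (j + 1))))
              * (2 : ℝ) ^ (B (K - (j + 1)) / N (K - (j + 1))
                  - B (K - (j + 1)) / N (K - (j + 1) + i))

noncomputable def hbarClosedForm (N B : ℕ → ℝ) (K k : ℕ) (x : ℝ) : ℝ :=
  (-1 : ℝ) ^ (K - k + 1) * (∏ i ∈ Finset.Icc k K, N i) * x ^ (1 / N k)
    + ∑ i ∈ Finset.range (K - k + 1), coefAux N B K (K - k) i * x ^ (1 / N k - 1 / N (k + i))

lemma integrableOn_Ioo_rpow {x y p : ℝ} (hx : 0 < x) :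
    IntegrableOn (fun t : ℝ => t ^ p) (Set.Ioo x y) :=
  (ContinuousOn.integrableOn_Icc (continuousOn_id.rpow_const fun _ ht =>
    Or.inl (hx.trans_le ht.1).ne')).mono_set Set.Ioo_subset_Icc_self

lemma integral_Ioo_rpow_sub_one {x y p : ℝ} (hx : 0 < x) (hxy : x ≤ y) (hp : p ≠ 0) :
    ∫ t in Set.Ioo x y, t ^ (p - 1) = (y ^ p - x ^ p) / p := by
  rw [← integral_Ioc_eq_integral_Ioo, ← intervalIntegral.integral_of_le hxy,
    integral_rpow (Or.inr ⟨by contrapose! hp; linarith,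
      Set.notMem_uIcc_of_lt hx (hx.trans_le hxy)⟩), sub_add_cancel]

lemma integral_Ioo_sum_rpow {ι : Type*} (s : Finset ι) (c p : ι → ℝ) {x y : ℝ}
    (hx : 0 < x) (hxy : x ≤ y) (hp : ∀ i ∈ s, p i ≠ 0) :
    ∫ t in Set.Ioo x y, ∑ i ∈ s, c i * t ^ (p i - 1)
      = ∑ i ∈ s, c i * (y ^ p i - x ^ p i) / p i := by
  rw [integral_finsetSum _ fun i _ => (integrableOn_Ioo_rpow hx).const_mul _]
  refine Finset.sum_congr rfl fun i hi => ?_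
  rw [integral_const_mul, integral_Ioo_rpow_sub_one hx hxy (hp i hi), mul_div_assoc]

lemma inv_one_div_sub_one_div {a b : ℝ} (ha : a ≠ 0) (hb : b ≠ 0) (hab : b ≠ a) :
    (1 / a - 1 / b)⁻¹ = b * a / (b - a) := by
  field_simp

lemma sum_Icc_one_eq_sum_range {M : Type*} [AddCommMonoid M] (f : ℕ → M) (n : ℕ) :
    ∑ i ∈ Finset.Icc 1 n, f i = ∑ i ∈ Finset.range n, f (i + 1) := by
  rw [Finset.range_eq_Ico, Finset.sum_Ico_add', zero_add, Finset.Ico_add_one_right_eq_Icc]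

lemma hbarAux_sub_of_lt (N B : ℕ → ℝ) {K k : ℕ} (hk : k < K) (x : ℝ) :
    hbarAux N B K (K - k) x = ∫ t in Set.Ioo x ((2 : ℝ) ^ B k),
      t ^ (1 / N k - 1 / N (k + 1) - 1) * hbarAux N B K (K - (k + 1)) t := by
  obtain ⟨j, rfl⟩ : ∃ j, K = k + (j + 1) := ⟨K - (k + 1), by omega⟩
  rw [show k + (j + 1) - k = j + 1 by omega, hbarAux, show k + (j + 1) - (j + 1) = k by omega,
    show k + (j + 1) - j = k + 1 by omega, show k + (j + 1) - (k + 1) = j by omega]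

lemma coefAux_sub_of_lt_succ (N B : ℕ → ℝ) {K k : ℕ} (hk : k < K) (i : ℕ) :
    coefAux N B K (K - k) (i + 1)
      = -(N (k + (i + 1)) * N k / (N (k + (i + 1)) - N k)) * coefAux N B K (K - (k + 1)) i := by
  obtain ⟨j, rfl⟩ : ∃ j, K = k + (j + 1) := ⟨K - (k + 1), by omega⟩
  rw [show k + (j + 1) - k = j + 1 by omega, coefAux, show k + (j + 1) - (j + 1) = k by omega,
    show k + (j + 1) - (k + 1) = j by omega]

lemma coefAux_sub_of_lt_zero (N B : ℕ → ℝ) {K k : ℕ} (hk : k < K) :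
    coefAux N B K (K - k) 0
      = (-1 : ℝ) ^ (K - k) * (∏ i ∈ Finset.Icc k K, N i) * (2 : ℝ) ^ (B k / N k)
        + ∑ i ∈ Finset.range (K - k), coefAux N B K (K - (k + 1)) i
            * (N (k + (i + 1)) * N k / (N (k + (i + 1)) - N k))
            * (2 : ℝ) ^ (B k / N k - B k / N (k + (i + 1))) := by
  obtain ⟨j, rfl⟩ : ∃ j, K = k + (j + 1) := ⟨K - (k + 1), by omega⟩
  rw [show k + (j + 1) - k = j + 1 by omega, coefAux, show k + (j + 1) - (j + 1) = k by omega,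
    show k + (j + 1) - (k + 1) = j by omega, sum_Icc_one_eq_sum_range]
  simp only [Nat.add_sub_cancel]

lemma rpow_mul_hbarClosedForm_succ (N B : ℕ → ℝ) {K k : ℕ} (hk : k < K) {t : ℝ}
    (ht : 0 < t) :
    t ^ (1 / N k - 1 / N (k + 1) - 1) * hbarClosedForm N B K (k + 1) t
      = (-1 : ℝ) ^ (K - k) * (∏ i ∈ Finset.Icc (k + 1) K, N i) * t ^ (1 / N k - 1)
        + ∑ i ∈ Finset.range (K - k),
            coefAux N B K (K - (k + 1)) i * t ^ (1 / N k - 1 / N (k + (i + 1)) - 1) := by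
  rw [hbarClosedForm, mul_add, Finset.mul_sum, show K - (k + 1) + 1 = K - k by omega]
  congr 1
  · rw [mul_left_comm, ← rpow_add ht]; congr 2; ring
  · refine Finset.sum_congr rfl fun i _ => ?_
    rw [mul_left_comm, ← rpow_add ht, show k + 1 + i = k + (i + 1) by omega]
    congr 2; ring

lemma integral_rpow_mul_hbarClosedForm (N B : ℕ → ℝ) {K k : ℕ} (hk : k < K)
    (hN : ∀ i ∈ Finset.Icc k K, N i ≠ 0) (hNdist : ∀ i ∈ Finset.Ioc k K, N i ≠ N k)
    {x : ℝ} (hx : 0 < x) (hxB : x ≤ (2 : ℝ) ^ B k) :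
    ∫ t in Set.Ioo x ((2 : ℝ) ^ B k), t ^ (1 / N k - 1 / N (k + 1) - 1)
        * hbarClosedForm N B K (k + 1) t
      = hbarClosedForm N B K k x := by
  set Y := (2 : ℝ) ^ B k
  set p : ℕ → ℝ := fun i => 1 / N k - 1 / N (k + (i + 1))
  have hNk : N k ≠ 0 := hN k (by simp [hk.le])
  have hmem : ∀ i ∈ Finset.range (K - k), k + (i + 1) ∈ Finset.Ioc k K := fun i hi => by
    simp only [Finset.mem_range, Finset.mem_Ioc] at hi ⊢; omega
  have hp : ∀ i ∈ Finset.range (K - k), p i ≠ 0 := fun i hi => by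
    rw [sub_ne_zero, Ne, one_div, one_div, inv_inj]; exact (hNdist _ (hmem i hi)).symm
  have hp_inv : ∀ i ∈ Finset.range (K - k),
      (p i)⁻¹ = N (k + (i + 1)) * N k / (N (k + (i + 1)) - N k) := fun i hi =>
    inv_one_div_sub_one_div hNk (hN _ (Finset.Ioc_subset_Icc_self (hmem i hi)))
      (hNdist _ (hmem i hi))
  have hY : Y ^ (1 / N k) = (2 : ℝ) ^ (B k / N k) := by
    rw [← rpow_mul zero_le_two, mul_one_div]
  have hY_sub : ∀ m, Y ^ (1 / N k - 1 / N m) = (2 : ℝ) ^ (B k / N k - B k / N m) := fun m => by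
    rw [← rpow_mul zero_le_two]; ring_nf
  rw [setIntegral_congr_fun measurableSet_Ioo
      fun t ht => rpow_mul_hbarClosedForm_succ N B hk (hx.trans ht.1),
    integral_add ((integrableOn_Ioo_rpow hx).const_mul _)
      (integrable_finsetSum _ fun i _ => (integrableOn_Ioo_rpow hx).const_mul _),
    integral_const_mul, integral_Ioo_rpow_sub_one hx hxB (one_div_ne_zero hNk),
    integral_Ioo_sum_rpow _ _ _ hx hxB hp]
  rw [hbarClosedForm, Finset.sum_range_succ', coefAux_sub_of_lt_zero N B hk,
    ← Finset.mul_prod_Ioc_eq_prod_Icc hk.le, ← Finset.Icc_add_one_left_eq_Ioc]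
  simp only [coefAux_sub_of_lt_succ N B hk, add_zero, sub_self, rpow_zero, mul_one]
  rw [Finset.sum_congr rfl fun i hi =>
    show coefAux N B K (K - (k + 1)) i * (Y ^ p i - x ^ p i) / p i
      = coefAux N B K (K - (k + 1)) i * (N (k + (i + 1)) * N k / (N (k + (i + 1)) - N k))
          * (2 : ℝ) ^ (B k / N k - B k / N (k + (i + 1)))
        + -(N (k + (i + 1)) * N k / (N (k + (i + 1)) - N k)) * coefAux N B K (K - (k + 1)) i
          * x ^ p i by
    rw [div_eq_mul_inv, hp_inv i hi, hY_sub]; ring,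
    Finset.sum_add_distrib, hY, div_div_eq_mul_div, div_one]
  simp only [p]
  ring

lemma hbarAux_eq_hbarClosedForm (N B : ℕ → ℝ) {K k : ℕ}
    (hN : ∀ i ∈ Finset.Icc 1 K, N i ≠ 0)
    (hNdist : ∀ i ∈ Finset.Icc 1 K, ∀ j ∈ Finset.Icc 1 K, i ≠ j → N i ≠ N j)
    (hB : ∀ l < K, B l ≤ B (l + 1)) (hk : k ∈ Finset.Icc 1 K) {x : ℝ}
    (hx : x ∈ Set.Ioc 0 ((2 : ℝ) ^ B k)) :
    hbarAux N B K (K - k) x = hbarClosedForm N B K k x := by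
  obtain ⟨hk1, hkK⟩ := Finset.mem_Icc.mp hk
  clear hk
  induction hkK using Nat.decreasingInduction generalizing x with
  | self =>
    simp only [tsub_self, hbarAux, one_div, hbarClosedForm, zero_add, pow_one, Finset.Icc_self,
      Finset.prod_singleton, neg_mul, one_mul, Finset.range_one, Finset.sum_singleton, coefAux,
      add_zero, sub_self, rpow_zero, mul_one]
    ring
  | of_succ k hlt ih =>
    have hsub : Finset.Icc k K ⊆ Finset.Icc 1 K := Finset.Icc_subset_Icc_left hk1
    rw [hbarAux_sub_of_lt N B hlt, ← integral_rpow_mul_hbarClosedForm N B hlt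
      (fun i hi => hN i (hsub hi))
      (fun i hi => hNdist i (hsub (Finset.Ioc_subset_Icc_self hi)) k (by simp [hk1, hlt.le])
        (Finset.mem_Ioc.mp hi).1.ne') hx.1 hx.2]
    refine setIntegral_congr_fun measurableSet_Ioo fun t ht => ?_
    rw [ih ⟨hx.1.trans ht.1, ht.2.le.trans (rpow_le_rpow_of_exponent_le one_le_two (hB k hlt))⟩
      (by omega)]

theorem hbar_closed_form (K : ℕ) (N B b : ℕ → ℝ)
    (hN : ∀ i ∈ Finset.Icc 1 K, 0 < N i)
    (hNdist : ∀ i ∈ Finset.Icc 1 K, ∀ j ∈ Finset.Icc 1 K, i ≠ j → N i ≠ N j)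
    (hb : ∀ i ∈ Finset.Icc 1 K, 0 < b i)
    (hB : ∀ k, B k = ∑ l ∈ Finset.Icc 1 k, b l) :
    ∀ k ∈ Finset.Icc 1 K, ∀ x ∈ Set.Ioc (0 : ℝ) ((2 : ℝ) ^ (B k)),
      hbarAux N B K (K - k) x
        = (-1 : ℝ) ^ (K - k + 1) * (∏ i ∈ Finset.Icc k K, N i) * x ^ (1 / N k)
          + ∑ i ∈ Finset.range (K - k + 1),
              coefAux N B K (K - k) i * x ^ (1 / N k - 1 / N (k + i)) := by
  have hB_succ : ∀ l < K, B l ≤ B (l + 1) := fun l hl => by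
    rw [hB, hB, Finset.sum_Icc_succ_top (by omega)]
    linarith [hb (l + 1) (Finset.mem_Icc.mpr ⟨by omega, by omega⟩)]
  intro k hk x hx
  exact hbarAux_eq_hbarClosedForm N B (fun i hi => (hN i hi).ne') hNdist hB_succ hk hx
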